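/- arXiv:2101.05719 — 5 statements merged into one kernel-verified Lean document; each statement's English description precedes it below -/
import Mathlib

section
/- Let A ∈ ℝ^{m×n} have full column rank, let w, z, σ̄ ∈ ℝ^m be entrywise positive, let ε, γ > 0 and p ∈ (0, 2). For diagonal W = diag(w), define σ(W^{1/2-1/p} A) ∈ ℝ^m by σ(M)_i = (M (MᵀM)^{-1} Mᵀ)_{ii}. Suppose w ≈_ε σ(W^{1/2-1/p} A) + z and σ̄ ≈_γ σ(W^{1/2-1/p} A) + z. Define w' ∈ ℝ^m by w'_i = (w_i^{2/p - 1} · σ̄_i)^{p/2}, and W' = diag(w'). Then w ≈_{(ε+γ)p/2} w' and w' ≈_{(ε+γ)·|1 - p/2| + γ} σ(W'^{1/2-1/p} A) + z. -/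
/-!
Multiplying by `w_i^{2/p-1}` turns `σ(W^{1/2-1/p}A)_i + z_i` into
`(A (Aᵀ W^{1-2/p} A)⁻¹ Aᵀ)_{ii} + w_i^{2/p-1} z_i`, and `w'` is defined so that
`w'^{2/p} = w^{2/p-1} σ̄`. Entrywise closeness `w ≈ w'` propagates to the weights
`W^{1-2/p} ≈ W'^{1-2/p}` and, since matrix inversion is antitone in the Loewner order,
to the diagonals `(A (Aᵀ D A)⁻¹ Aᵀ)_{ii}`, with the error scaled by `|2/p - 1|`.
The first claim is the monotonicity of `x ↦ x^{p/2}`.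
-/

open Matrix

/-- `u ≈_δ v`: entrywise `e^{-δ} v ≤ u ≤ e^{δ} v`. -/
def Approx {m : ℕ} (δ : ℝ) (u v : Fin m → ℝ) : Prop :=
  ∀ i, Real.exp (-δ) * v i ≤ u i ∧ u i ≤ Real.exp δ * v i

/-- Leverage scores `σ(M)_i = (M (MᵀM)⁻¹ Mᵀ)_{ii}`. -/
noncomputable def lev {m n : ℕ} (M : Matrix (Fin m) (Fin n) ℝ) : Fin m → ℝ :=
  fun i => (M * (Mᵀ * M)⁻¹ * Mᵀ) i i

/-- The row-rescaled matrix `W^{1/2 - 1/p} A` for `W = diag w`. -/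
noncomputable def scaled {m n : ℕ} (w : Fin m → ℝ) (p : ℝ)
    (A : Matrix (Fin m) (Fin n) ℝ) : Matrix (Fin m) (Fin n) ℝ :=
  Matrix.diagonal (fun i => w i ^ ((1:ℝ)/2 - 1/p)) * A

namespace Approx

variable {m : ℕ} {δ δ' : ℝ} {u v x : Fin m → ℝ}

lemma symm (h : Approx δ u v) : Approx δ v u := fun i => by
  obtain ⟨h₁, h₂⟩ := h i
  constructor
  · have := mul_le_mul_of_nonneg_left h₂ (Real.exp_pos (-δ)).le
    rwa [← mul_assoc, ← Real.exp_add, neg_add_cancel, Real.exp_zero, one_mul] at this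
  · have := mul_le_mul_of_nonneg_left h₁ (Real.exp_pos δ).le
    rwa [← mul_assoc, ← Real.exp_add, add_neg_cancel, Real.exp_zero, one_mul] at this

lemma trans (h : Approx δ u v) (h' : Approx δ' v x) : Approx (δ + δ') u x := fun i => by
  obtain ⟨h₁, h₂⟩ := h i
  obtain ⟨h₁', h₂'⟩ := h' i
  constructor
  · calc Real.exp (-(δ + δ')) * x i = Real.exp (-δ) * (Real.exp (-δ') * x i) := by
          rw [neg_add, Real.exp_add, mul_assoc]
      _ ≤ Real.exp (-δ) * v i := by gcongr
      _ ≤ u i := h₁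
  · calc u i ≤ Real.exp δ * v i := h₂
      _ ≤ Real.exp δ * (Real.exp δ' * x i) := by gcongr
      _ = Real.exp (δ + δ') * x i := by rw [Real.exp_add, mul_assoc]

lemma mul_left {c : Fin m → ℝ} (hc : ∀ i, 0 ≤ c i) (h : Approx δ u v) :
    Approx δ (fun i => c i * u i) (fun i => c i * v i) := fun i => by
  obtain ⟨h₁, h₂⟩ := h i
  exact ⟨by rw [mul_left_comm]; exact mul_le_mul_of_nonneg_left h₁ (hc i),
    by rw [mul_left_comm]; exact mul_le_mul_of_nonneg_left h₂ (hc i)⟩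

lemma add {u' v' : Fin m → ℝ} (h : Approx δ u v) (h' : Approx δ u' v') :
    Approx δ (fun i => u i + u' i) (fun i => v i + v' i) := fun i => by
  rw [mul_add, mul_add]
  exact ⟨add_le_add (h i).1 (h' i).1, add_le_add (h i).2 (h' i).2⟩

lemma rpow (hv : ∀ i, 0 < v i) (h : Approx δ u v) (r : ℝ) :
    Approx (δ * |r|) (fun i => u i ^ r) (fun i => v i ^ r) := fun i => by
  have hexp : ∀ a, (Real.exp a * v i) ^ r = Real.exp (a * r) * v i ^ r := fun a => by
    rw [Real.mul_rpow (Real.exp_pos a).le (hv i).le, ← Real.exp_mul]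
  obtain ⟨h₁, h₂⟩ := h i
  have hlo : 0 < Real.exp (-δ) * v i := mul_pos (Real.exp_pos _) (hv i)
  rcases le_or_gt 0 r with hr | hr
  · rw [abs_of_nonneg hr]
    constructor
    · simpa only [hexp, neg_mul] using Real.rpow_le_rpow hlo.le h₁ hr
    · simpa only [hexp] using Real.rpow_le_rpow (hlo.trans_le h₁).le h₂ hr
  · rw [abs_of_neg hr]
    constructor
    · simpa only [hexp, mul_neg, neg_neg] using
        Real.rpow_le_rpow_of_nonpos (hlo.trans_le h₁) h₂ hr.le
    · simpa only [hexp, neg_mul, mul_neg] using Real.rpow_le_rpow_of_nonpos hlo h₁ hr.le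

lemma of_mul_left {c : Fin m → ℝ} (hc : ∀ i, 0 < c i)
    (h : Approx δ (fun i => c i * u i) (fun i => c i * v i)) : Approx δ u v := fun i => by
  obtain ⟨h₁, h₂⟩ := h i
  rw [mul_left_comm] at h₁ h₂
  exact ⟨le_of_mul_le_mul_left h₁ (hc i), le_of_mul_le_mul_left h₂ (hc i)⟩

lemma pos (hv : ∀ i, 0 < v i) (h : Approx δ u v) (i : Fin m) : 0 < u i :=
  (mul_pos (Real.exp_pos _) (hv i)).trans_le (h i).1

end Approx

namespace Matrix

section PosDef

variable {k : Type*} [Fintype k] [DecidableEq k]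

lemma PosDef.two_mul_dotProduct_sub_le {Y : Matrix k k ℝ} (hY : Y.PosDef) (u v : k → ℝ) :
    2 * (u ⬝ᵥ v) - u ⬝ᵥ (Y *ᵥ u) ≤ v ⬝ᵥ (Y⁻¹ *ᵥ v) := by
  have hYt : Yᵀ = Y := by simpa [conjTranspose_eq_transpose_of_trivial] using hY.isHermitian.eq
  have hYY : Y *ᵥ (Y⁻¹ *ᵥ v) = v := by
    rw [mulVec_mulVec, mul_nonsing_inv _ hY.det_pos.ne'.isUnit, one_mulVec]
  have hsym : (Y⁻¹ *ᵥ v) ⬝ᵥ (Y *ᵥ u) = u ⬝ᵥ v := by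
    rw [dotProduct_mulVec, ← mulVec_transpose, hYt, hYY, dotProduct_comm]
  -- completing the square at `u = Y⁻¹ v`
  have := hY.posSemidef.dotProduct_mulVec_nonneg (u - Y⁻¹ *ᵥ v)
  simp only [star_trivial, mulVec_sub, dotProduct_sub, sub_dotProduct, hYY, hsym] at this
  rw [dotProduct_comm (Y⁻¹ *ᵥ v) v] at this
  linarith

lemma PosDef.dotProduct_inv_mulVec_le {X Y : Matrix k k ℝ} (hX : X.PosDef) (hY : Y.PosDef)
    (hXY : (X - Y).PosSemidef) (v : k → ℝ) :
    v ⬝ᵥ (X⁻¹ *ᵥ v) ≤ v ⬝ᵥ (Y⁻¹ *ᵥ v) := by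
  set u := X⁻¹ *ᵥ v
  have hXu : X *ᵥ u = v := by
    rw [mulVec_mulVec, mul_nonsing_inv _ hX.det_pos.ne'.isUnit, one_mulVec]
  have hYX : u ⬝ᵥ (Y *ᵥ u) ≤ u ⬝ᵥ (X *ᵥ u) := by
    have := hXY.dotProduct_mulVec_nonneg u
    simp only [star_trivial, sub_mulVec, dotProduct_sub] at this
    linarith
  calc v ⬝ᵥ (X⁻¹ *ᵥ v) = 2 * (u ⬝ᵥ v) - u ⬝ᵥ (X *ᵥ u) := by
        rw [hXu, dotProduct_comm v u]; ring
    _ ≤ 2 * (u ⬝ᵥ v) - u ⬝ᵥ (Y *ᵥ u) := by linarith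
    _ ≤ v ⬝ᵥ (Y⁻¹ *ᵥ v) := hY.two_mul_dotProduct_sub_le u v

end PosDef

lemma mul_mul_transpose_apply_self {l k R : Type*} [Fintype k] [CommSemiring R]
    (A : Matrix l k R) (B : Matrix k k R) (i : l) :
    (A * B * Aᵀ) i i = A i ⬝ᵥ (B *ᵥ A i) := by
  simp only [mul_apply, transpose_apply, dotProduct, mulVec, Finset.mul_sum, Finset.sum_mul]
  rw [Finset.sum_comm]
  exact Finset.sum_congr rfl fun j _ => Finset.sum_congr rfl fun k _ => by ring

lemma mulVec_injective_of_rank_eq {m n : ℕ} {A : Matrix (Fin m) (Fin n) ℝ} (hA : A.rank = n) :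
    Function.Injective A.mulVec := by
  have h := LinearMap.finrank_range_add_finrank_ker A.mulVecLin
  rwa [← Matrix.rank, hA, Module.finrank_fin_fun, add_eq_left, Submodule.finrank_eq_zero,
    LinearMap.ker_eq_bot] at h

lemma inv_smul_of_ne_zero {k : Type*} [Fintype k] [DecidableEq k] {X : Matrix k k ℝ}
    (hX : IsUnit X.det) {c : ℝ} (hc : c ≠ 0) : (c • X)⁻¹ = c⁻¹ • X⁻¹ := by
  have := invertibleOfNonzero hc
  rw [inv_smul _ _ hX, invOf_eq_inv]

end Matrix

section GramInvDiag

variable {m n : ℕ} (A : Matrix (Fin m) (Fin n) ℝ)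

noncomputable def gramInvDiag (d : Fin m → ℝ) : Fin m → ℝ :=
  fun i => (A * (Aᵀ * diagonal d * A)⁻¹ * Aᵀ) i i

variable {A}

lemma posDef_transpose_mul_diagonal_mul (hA : Function.Injective A.mulVec) {d : Fin m → ℝ}
    (hd : ∀ i, 0 < d i) : (Aᵀ * diagonal d * A).PosDef := by
  simpa [conjTranspose_eq_transpose_of_trivial] using
    (PosDef.diagonal hd).conjTranspose_mul_mul_same hA

lemma gramInvDiag_le_of_le (hA : Function.Injective A.mulVec) {d d' : Fin m → ℝ}
    (hd' : ∀ i, 0 < d' i) (h : ∀ i, d' i ≤ d i) (i : Fin m) :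
    gramInvDiag A d i ≤ gramInvDiag A d' i := by
  have hdiff : (Aᵀ * diagonal d * A - Aᵀ * diagonal d' * A).PosSemidef := by
    rw [← Matrix.sub_mul, ← Matrix.mul_sub, diagonal_sub]
    simpa [conjTranspose_eq_transpose_of_trivial] using
      (PosSemidef.diagonal fun i => sub_nonneg.2 (h i)).conjTranspose_mul_mul_same A
  simp only [gramInvDiag, mul_mul_transpose_apply_self]
  exact PosDef.dotProduct_inv_mulVec_le
    (posDef_transpose_mul_diagonal_mul hA fun i => (hd' i).trans_le (h i))
    (posDef_transpose_mul_diagonal_mul hA hd') hdiff _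

lemma gramInvDiag_const_mul (hA : Function.Injective A.mulVec) {d : Fin m → ℝ}
    (hd : ∀ i, 0 < d i) {c : ℝ} (hc : c ≠ 0) (i : Fin m) :
    gramInvDiag A (fun j => c * d j) i = c⁻¹ * gramInvDiag A d i := by
  have hcd : Aᵀ * diagonal (fun j => c * d j) * A = c • (Aᵀ * diagonal d * A) := by
    rw [show (fun j => c * d j) = c • d from rfl, diagonal_smul, Matrix.mul_smul, Matrix.smul_mul]
  simp only [gramInvDiag, hcd,
    inv_smul_of_ne_zero (posDef_transpose_mul_diagonal_mul hA hd).det_pos.ne'.isUnit hc,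
    Matrix.mul_smul, Matrix.smul_mul, Matrix.smul_apply, smul_eq_mul]

lemma Approx.gramInvDiag (hA : Function.Injective A.mulVec) {η : ℝ} {d d' : Fin m → ℝ}
    (hd' : ∀ i, 0 < d' i) (h : Approx η d d') :
    Approx η (gramInvDiag A d) (gramInvDiag A d') := by
  intro i
  have hd := h.pos hd'
  have hexp : ∀ a, _root_.gramInvDiag A (fun j => Real.exp a * d' j) i
      = Real.exp (-a) * _root_.gramInvDiag A d' i := fun a => by
    rw [gramInvDiag_const_mul hA hd' (Real.exp_pos a).ne', Real.exp_neg]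
  constructor
  · simpa only [hexp, neg_neg] using gramInvDiag_le_of_le hA hd (fun j => (h j).2) i
  · simpa only [hexp, neg_neg] using
      gramInvDiag_le_of_le hA (fun j => mul_pos (Real.exp_pos _) (hd' j)) (fun j => (h j).1) i

lemma lev_diagonal_mul (d : Fin m → ℝ) (i : Fin m) :
    lev (diagonal d * A) i = d i ^ 2 * gramInvDiag A (fun j => d j ^ 2) i := by
  have hgram : (diagonal d * A)ᵀ * (diagonal d * A) = Aᵀ * diagonal (fun j => d j ^ 2) * A := by
    simp only [transpose_mul, diagonal_transpose, Matrix.mul_assoc]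
    simp only [← Matrix.mul_assoc, diagonal_mul_diagonal, sq]
  have hsandwich : ∀ X : Matrix (Fin n) (Fin n) ℝ, diagonal d * A * X * (Aᵀ * diagonal d)
      = diagonal d * (A * X * Aᵀ) * diagonal d := fun X => by simp only [Matrix.mul_assoc]
  rw [lev, gramInvDiag, hgram, transpose_mul, diagonal_transpose, hsandwich, mul_diagonal,
    diagonal_mul]
  ring

end GramInvDiag

lemma rpow_mul_lev_scaled_add {m n : ℕ} (A : Matrix (Fin m) (Fin n) ℝ) {u : Fin m → ℝ}
    (hu : ∀ i, 0 < u i) (p c : ℝ) (i : Fin m) :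
    u i ^ (2 / p - 1) * (lev (scaled u p A) i + c)
      = gramInvDiag A (fun j => u j ^ (1 - 2 / p)) i + c * u i ^ (2 / p - 1) := by
  have hsq : ∀ j, (u j ^ ((1 : ℝ) / 2 - 1 / p)) ^ 2 = u j ^ (1 - 2 / p) := fun j => by
    rw [← Real.rpow_natCast, ← Real.rpow_mul (hu j).le]
    ring_nf
  have hcancel : u i ^ (2 / p - 1) * u i ^ (1 - 2 / p) = 1 := by
    rw [← Real.rpow_add (hu i)]
    simp
  rw [scaled, lev_diagonal_mul, hsq, mul_add, ← mul_assoc, hcancel, one_mul, mul_comm c]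
  simp only [hsq]

lemma approx_rpow_update {m : ℕ} {w σb w' : Fin m → ℝ} {δ p : ℝ} (hp : 0 < p)
    (hw : ∀ i, 0 < w i) (hσb : ∀ i, 0 < σb i) (h : Approx δ w σb)
    (hw' : ∀ i, w' i = (w i ^ (2 / p - 1) * σb i) ^ (p / 2)) : Approx (δ * p / 2) w w' := by
  have hwq : ∀ i, 0 < w i ^ (2 / p - 1) := fun i => Real.rpow_pos_of_pos (hw i) _
  have h' := (h.mul_left fun i => (hwq i).le).rpow (fun i => mul_pos (hwq i) (hσb i)) (p / 2)
  convert h' using 2 with i i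
  · rw [abs_of_pos (half_pos hp), mul_div_assoc]
  · rw [← Real.rpow_add_one (hw i).ne', sub_add_cancel, ← inv_div 2 p,
      Real.rpow_rpow_inv (hw i).le (by positivity)]
  · exact hw' i

lemma approx_lev_scaled_add {m n : ℕ} {A : Matrix (Fin m) (Fin n) ℝ}
    (hA : Function.Injective A.mulVec) {w w' z σb : Fin m → ℝ} {δ γ p : ℝ}
    (hw' : ∀ i, 0 < w' i) (hz : ∀ i, 0 ≤ z i) (hww' : Approx δ w w')
    (hσb : Approx γ σb (fun i => lev (scaled w p A) i + z i))
    (hw'_pow : ∀ i, w' i ^ (2 / p) = w i ^ (2 / p - 1) * σb i) :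
    Approx (γ + δ * |2 / p - 1|) w' (fun i => lev (scaled w' p A) i + z i) := by
  have hw := hww'.pos hw'
  have hgram := (hww'.rpow hw' (1 - 2 / p)).gramInvDiag hA fun i => Real.rpow_pos_of_pos (hw' i) _
  rw [abs_sub_comm] at hgram
  have hreg := (hww'.rpow hw' (2 / p - 1)).mul_left hz
  have hleft := hσb.mul_left fun i => (Real.rpow_pos_of_pos (hw i) (2 / p - 1)).le
  simp only [rpow_mul_lev_scaled_add A hw] at hleft
  have hpow : ∀ i, w' i ^ (2 / p - 1) * w' i = w i ^ (2 / p - 1) * σb i := fun i => by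
    rw [← Real.rpow_add_one (hw' i).ne', sub_add_cancel, hw'_pow]
  have h := hleft.trans (hgram.add hreg)
  simp only [← rpow_mul_lev_scaled_add A hw', ← hpow] at h
  exact h.of_mul_left fun i => Real.rpow_pos_of_pos (hw' i) _

lemma half_mul_abs_two_div_sub_one {p : ℝ} (hp : 0 < p) : p / 2 * |2 / p - 1| = |1 - p / 2| := by
  nth_rw 1 [← abs_of_pos (half_pos hp)]
  rw [← abs_mul]
  congr 1
  field_simp

theorem stmt_4_general {m n : ℕ} (A : Matrix (Fin m) (Fin n) ℝ)
    (hrank : A.rank = n)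
    (w z σb : Fin m → ℝ)
    (hw : ∀ i, 0 < w i) (hz : ∀ i, 0 < z i) (hσb : ∀ i, 0 < σb i)
    (ε γ p : ℝ) (hp : p ∈ Set.Ioo (0:ℝ) 2)
    (hw_apx : Approx ε w (fun i => lev (scaled w p A) i + z i))
    (hσ_apx : Approx γ σb (fun i => lev (scaled w p A) i + z i))
    (w' : Fin m → ℝ)
    (hw' : ∀ i, w' i = (w i ^ (2/p - 1) * σb i) ^ (p/2)) :
    Approx ((ε + γ) * p / 2) w w' ∧
    Approx ((ε + γ) * |1 - p/2| + γ) w' (fun i => lev (scaled w' p A) i + z i) := by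
  have hwσb : ∀ i, 0 < w i ^ (2 / p - 1) * σb i := fun i =>
    mul_pos (Real.rpow_pos_of_pos (hw i) _) (hσb i)
  have hw'_pos : ∀ i, 0 < w' i := fun i => hw' i ▸ Real.rpow_pos_of_pos (hwσb i) _
  have hw'_pow : ∀ i, w' i ^ (2 / p) = w i ^ (2 / p - 1) * σb i := fun i => by
    rw [hw', ← inv_div 2 p, Real.rpow_inv_rpow (hwσb i).le (by simpa using hp.1.ne')]
  have hfirst := approx_rpow_update hp.1 hw hσb (hw_apx.trans hσ_apx.symm) hw'
  refine ⟨hfirst, ?_⟩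
  convert approx_lev_scaled_add (mulVec_injective_of_rank_eq hrank) hw'_pos (fun i => (hz i).le)
    hfirst hσ_apx hw'_pow using 1
  rw [mul_div_assoc, mul_assoc, half_mul_abs_two_div_sub_one hp.1, add_comm]

/-- One step of the Cohen–Peng iteration contracts the approximation error of
the `z`-regularized `ℓ_p` Lewis weights: if `w ≈_ε σ(W^{1/2-1/p}A) + z` and
`σ̄ ≈_γ σ(W^{1/2-1/p}A) + z`, and `w'_i = (w_i^{2/p-1} σ̄_i)^{p/2}`, then
`w ≈_{(ε+γ)p/2} w'` and `w' ≈_{(ε+γ)|1-p/2| + γ} σ(W'^{1/2-1/p}A) + z`. -/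
theorem stmt_4 {m n : ℕ} (A : Matrix (Fin m) (Fin n) ℝ)
    (hrank : A.rank = n)
    (w z σb : Fin m → ℝ)
    (hw : ∀ i, 0 < w i) (hz : ∀ i, 0 < z i) (hσb : ∀ i, 0 < σb i)
    (ε γ p : ℝ) (hε : 0 < ε) (hγ : 0 < γ) (hp : p ∈ Set.Ioo (0:ℝ) 2)
    (hw_apx : Approx ε w (fun i => lev (scaled w p A) i + z i))
    (hσ_apx : Approx γ σb (fun i => lev (scaled w p A) i + z i))
    (w' : Fin m → ℝ)
    (hw' : ∀ i, w' i = (w i ^ (2/p - 1) * σb i) ^ (p/2)) :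
    Approx ((ε + γ) * p / 2) w w' ∧
    Approx ((ε + γ) * |1 - p/2| + γ) w' (fun i => lev (scaled w' p A) i + z i) :=
  stmt_4_general A hrank w z σb hw hz hσb ε γ p hp hw_apx hσ_apx w' hw'
end

section
/- Let P ∈ ℝ^{m×m} be a symmetric matrix with P² = P (an orthogonal projection matrix), let Σ = diag(P_{11}, …, P_{mm}), and let P^{(2)} denote the entrywise (Hadamard) square of P, i.e., (P^{(2)})_{ij} = P_{ij}². Then 0 ⪯ P^{(2)} ⪯ Σ in the Loewner order. -/
/-! `P` and `1 - P` are orthogonal projections, hence positive semidefinite, and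
`Σ - P⁽²⁾ = (1 - P) ⊙ P`; so both inequalities are instances of the Schur product theorem. -/

open Matrix

open scoped MatrixOrder

theorem Matrix.diagonal_diag_sub_hadamard_self {n α : Type*} [DecidableEq n] [Ring α]
    (A : Matrix n n α) : diagonal (fun i => A i i) - A ⊙ A = (1 - A) ⊙ A := by
  ext i j
  by_cases h : i = j
  · subst h; simp [sub_mul]
  · simp [h, one_apply_ne h]

/-- For an orthogonal projection matrix `P` (symmetric and idempotent), with
`Σ = diag(P₁₁,…,P_mm)` and `P⁽²⁾` the entrywise square of `P`, we have
`0 ⪯ P⁽²⁾ ⪯ Σ` in the Loewner order. -/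
theorem stmt_6 {m : ℕ} (P : Matrix (Fin m) (Fin m) ℝ)
    (hsymm : Pᵀ = P) (hidem : P * P = P) :
    (Matrix.of fun i j => (P i j) ^ 2).PosSemidef ∧
    (Matrix.diagonal (fun i => P i i) - Matrix.of fun i j => (P i j) ^ 2).PosSemidef := by
  have hP : IsStarProjection P := ⟨hidem, by
    rwa [IsSelfAdjoint, star_eq_conjTranspose, conjTranspose_eq_transpose_of_trivial]⟩
  have hsq : (Matrix.of fun i j => (P i j) ^ 2) = P ⊙ P := by ext; simp [sq]
  rw [hsq, diagonal_diag_sub_hadamard_self]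
  exact ⟨hP.nonneg.posSemidef.hadamard hP.nonneg.posSemidef,
    hP.one_sub.nonneg.posSemidef.hadamard hP.nonneg.posSemidef⟩
end

section
/- Let P ∈ ℝ^{m×m} be symmetric with P² = P, and let X = diag(x) and V = diag(v) for x, v ∈ ℝ^m. Then for every index i, |e_iᵀ P X P V P e_i| ≤ (1/2)·e_iᵀ P X² P e_i + (1/2)·e_iᵀ P V² P e_i. Consequently, the vector with entries (P ∘ (P X P))v satisfies |((P ∘ (P X P)) v)_i| ≤ (1/2)(P^{(2)} x²)_i + (1/2)(P^{(2)} v²)_i, where ∘ denotes the Hadamard product, P^{(2)} is the entrywise square of P, and x², v² are entrywise squares. -/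
open Matrix

/-!
Writing `Q = P X P` and `R = P V P`, idempotence and symmetry of `P` give `P X P V P = Q Rᵀ`,
so the diagonal entry is an inner product of two rows and AM-GM bounds it by half the sum of
their squared norms. The squared norm of row `i` of `Q` is `(P X P X P)ᵢᵢ`, which is at
most `(P X² P)ᵢᵢ` because `P X (1 - P) X P = (P X (1 - P)) (P X (1 - P))ᵀ` has nonnegative
diagonal.
The second inequality is the first one with both sides written out entrywise.
-/

namespace Matrix

variable {m n R : Type*} [Fintype n]

theorem mul_diagonal_mul_transpose_apply_self [CommRing R] [DecidableEq n] (A : Matrix m n R)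
    (d : n → R) (i : m) : (A * diagonal d * Aᵀ) i i = ∑ j, A i j ^ 2 * d j := by
  rw [mul_apply]
  simp only [mul_diagonal, transpose_apply]
  exact Finset.sum_congr rfl fun j _ => by ring

section Ordered

variable [CommRing R] [LinearOrder R] [IsStrictOrderedRing R]

theorem mul_transpose_self_apply_self_nonneg (B : Matrix m n R) (i : m) :
    0 ≤ (B * Bᵀ) i i := by
  simp only [mul_apply, transpose_apply]
  exact Finset.sum_nonneg fun j _ => mul_self_nonneg (B i j)

theorem mul_mul_transpose_apply_self_le_of_idempotent [DecidableEq n] {P : Matrix n n R}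
    (hsymm : Pᵀ = P) (hidem : P * P = P) (A : Matrix m n R) (i : m) :
    (A * P * Aᵀ) i i ≤ (A * Aᵀ) i i := by
  have hcompl : (1 - P) * (1 - P)ᵀ = 1 - P := by
    rw [transpose_sub, transpose_one, hsymm, sub_mul, mul_sub, mul_sub, hidem]
    simp
  have hdiff : A * Aᵀ - A * P * Aᵀ = A * (1 - P) * (A * (1 - P))ᵀ := by
    calc A * Aᵀ - A * P * Aᵀ = A * (1 - P) * Aᵀ := by
          rw [Matrix.mul_sub, Matrix.sub_mul, Matrix.mul_one]
      _ = A * ((1 - P) * (1 - P)ᵀ) * Aᵀ := by rw [hcompl]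
      _ = A * (1 - P) * (A * (1 - P))ᵀ := by
          simp only [transpose_mul, Matrix.mul_assoc]
  have := mul_transpose_self_apply_self_nonneg (A * (1 - P)) i
  rw [← hdiff, sub_apply] at this
  linarith

end Ordered

theorem abs_mul_transpose_apply_self_le [Field R] [LinearOrder R] [IsStrictOrderedRing R]
    (A B : Matrix m n R) (i : m) :
    |(A * Bᵀ) i i| ≤ 1 / 2 * (A * Aᵀ) i i + 1 / 2 * (B * Bᵀ) i i := by
  simp only [mul_apply, transpose_apply]
  rw [abs_le, Finset.mul_sum, Finset.mul_sum, ← Finset.sum_add_distrib,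
    ← Finset.sum_neg_distrib]
  constructor
  · exact Finset.sum_le_sum fun j _ => by nlinarith [sq_nonneg (A i j + B i j)]
  · exact Finset.sum_le_sum fun j _ => by nlinarith [sq_nonneg (A i j - B i j)]

theorem mul_diagonal_mul_mul_transpose_apply_self_le [CommRing R] [LinearOrder R]
    [IsStrictOrderedRing R] [DecidableEq n] {P : Matrix n n R} (hsymm : Pᵀ = P)
    (hidem : P * P = P) (d : n → R) (i : n) :
    (P * diagonal d * P * (P * diagonal d * P)ᵀ) i i ≤
      (P * diagonal (fun j => d j ^ 2) * P) i i := by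
  have h := mul_mul_transpose_apply_self_le_of_idempotent hsymm hidem (P * diagonal d) i
  have hsq : diagonal d * diagonal d = diagonal (fun j => d j ^ 2) := by
    simp only [diagonal_mul_diagonal, sq]
  rw [← hsq]
  simp only [transpose_mul, diagonal_transpose, hsymm, Matrix.mul_assoc,
    IsIdempotentElem.mul_self_mul hidem] at h ⊢
  exact h

end Matrix

/-- For an orthogonal projection matrix `P` and diagonal `X = diag x`, `V = diag v`:
`|e_iᵀ P X P V P e_i| ≤ ½ e_iᵀ P X² P e_i + ½ e_iᵀ P V² P e_i`, and consequently
`|((P ∘ (P X P)) v)_i| ≤ ½ (P⁽²⁾ x²)_i + ½ (P⁽²⁾ v²)_i`, where `∘` is the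
Hadamard product and squares of vectors are entrywise. -/
theorem stmt_8 {m : ℕ} (P : Matrix (Fin m) (Fin m) ℝ)
    (hsymm : Pᵀ = P) (hidem : P * P = P) (x v : Fin m → ℝ) (i : Fin m) :
    |(P * Matrix.diagonal x * P * Matrix.diagonal v * P) i i| ≤
      (1/2) * (P * Matrix.diagonal (fun j => (x j) ^ 2) * P) i i +
      (1/2) * (P * Matrix.diagonal (fun j => (v j) ^ 2) * P) i i ∧
    |∑ j, P i j * (P * Matrix.diagonal x * P) i j * v j| ≤
      (1/2) * (∑ j, (P i j) ^ 2 * (x j) ^ 2) +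
      (1/2) * (∑ j, (P i j) ^ 2 * (v j) ^ 2) := by
  have hfactor : P * diagonal x * P * diagonal v * P =
      P * diagonal x * P * (P * diagonal v * P)ᵀ := by
    simp only [transpose_mul, diagonal_transpose, hsymm, Matrix.mul_assoc,
      IsIdempotentElem.mul_self_mul hidem]
  have hdiag : |(P * diagonal x * P * diagonal v * P) i i| ≤
      1 / 2 * (P * diagonal (fun j => x j ^ 2) * P) i i +
        1 / 2 * (P * diagonal (fun j => v j ^ 2) * P) i i := by
    rw [hfactor]
    have := abs_mul_transpose_apply_self_le (P * diagonal x * P) (P * diagonal v * P) i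
    linarith [mul_diagonal_mul_mul_transpose_apply_self_le hsymm hidem x i,
      mul_diagonal_mul_mul_transpose_apply_self_le hsymm hidem v i]
  have hsum (d : Fin m → ℝ) :
      ∑ j, P i j ^ 2 * d j ^ 2 = (P * diagonal (fun j => d j ^ 2) * P) i i := by
    rw [← mul_diagonal_mul_transpose_apply_self, hsymm]
  have hentry : ∑ j, P i j * (P * diagonal x * P) i j * v j =
      (P * diagonal x * P * diagonal v * P) i i := by
    rw [Matrix.mul_assoc _ (diagonal v), mul_apply]
    refine Finset.sum_congr rfl fun j _ => ?_
    rw [diagonal_mul, ← transpose_apply P i j, hsymm]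
    ring
  rw [hsum, hsum, hentry]
  exact ⟨hdiag, hdiag⟩
end

section
/- Let φ(x) = -log(1-x) - log(1+x) on (-1, 1), so φ'(x) = 1/(1-x) - 1/(1+x) and φ''(x) = 1/(1-x)² + 1/(1+x)². Suppose x ∈ (-1, 1), a > 0, y ∈ ℝ with |y| ≤ 1/10, and s ∈ ℝ satisfies s = a·(y·√(φ''(x)) - φ'(x)). Then x·s + |s| ≤ 20·a. -/
/-- Pointwise duality-gap inequality for the barrier `φ(x) = -log(1-x) - log(1+x)`
on `(-1, 1)`: if `a > 0`, `|y| ≤ 1/10` and `s = a (y √(φ''(x)) - φ'(x))`, where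
`φ'(x) = 1/(1-x) - 1/(1+x)` and `φ''(x) = 1/(1-x)² + 1/(1+x)²`, then
`x·s + |s| ≤ 20 a`. -/
theorem stmt_13 (x : ℝ) (hx : x ∈ Set.Ioo (-1:ℝ) 1) (a : ℝ) (ha : 0 < a)
    (y : ℝ) (hy : |y| ≤ 1/10) (s : ℝ)
    (hs : s = a * (y * Real.sqrt (1/(1-x)^2 + 1/(1+x)^2) - (1/(1-x) - 1/(1+x)))) :
    x * s + |s| ≤ 20 * a := by
  obtain ⟨hx1, hx2⟩ := hx
  have hu : 0 < 1 - x := by linarith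
  have hv : 0 < 1 + x := by linarith
  set A := 1/(1-x) with hAdef
  set B := 1/(1+x) with hBdef
  have hA0 : 0 < A := one_div_pos.mpr hu
  have hB0 : 0 < B := one_div_pos.mpr hv
  have hA : A * (1-x) = 1 := one_div_mul_cancel hu.ne'
  have hB : B * (1+x) = 1 := one_div_mul_cancel hv.ne'
  set q := Real.sqrt (1/(1-x)^2 + 1/(1+x)^2) with hqdef
  have hq0 : 0 ≤ q := Real.sqrt_nonneg _
  have hq : q ≤ A + B := by
    have h1 : 1/(1-x)^2 + 1/(1+x)^2 ≤ (A + B)^2 := by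
      have h2 : 1/(1-x)^2 = A^2 := by rw [hAdef, div_pow, one_pow]
      have h3 : 1/(1+x)^2 = B^2 := by rw [hBdef, div_pow, one_pow]
      nlinarith [mul_pos hA0 hB0]
    calc q ≤ Real.sqrt ((A+B)^2) := Real.sqrt_le_sqrt h1
      _ = A + B := Real.sqrt_sq (by positivity)
  have hyq1 : y * q ≤ (A + B)/10 := by
    have h1 : y * q ≤ |y| * q := by
      have := le_abs_self (y*q); rwa [abs_mul, abs_of_nonneg hq0] at this
    have h2 : |y| * q ≤ (1/10) * (A + B) := mul_le_mul hy hq hq0 (by norm_num)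
    linarith
  have hyq2 : -((A + B)/10) ≤ y * q := by
    have h1 : -(|y| * q) ≤ y * q := by
      have := neg_abs_le (y*q); rwa [abs_mul, abs_of_nonneg hq0] at this
    have h2 : |y| * q ≤ (1/10) * (A + B) := mul_le_mul hy hq hq0 (by norm_num)
    linarith
  rcases le_total x (-1/2) with hc | hc
  · -- left case: s ≥ 0
    have hAle : A ≤ 2/3 := by rw [hAdef, div_le_iff₀ hu]; linarith
    have hBge : 2 ≤ B := by rw [hBdef, le_div_iff₀ hv]; linarith
    have hs0 : 0 ≤ s := by
      rw [hs]
      apply mul_nonneg ha.le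
      have : (A + B)/10 ≤ B - A := by linarith
      linarith
    have hsU : s ≤ a * (2 * B) := by
      rw [hs]
      apply mul_le_mul_of_nonneg_left _ ha.le
      linarith
    rw [abs_of_nonneg hs0]
    have h1 : x * s + s = (1 + x) * s := by ring
    rw [h1]
    have h2 : (1 + x) * s ≤ (1 + x) * (a * (2 * B)) :=
      mul_le_mul_of_nonneg_left hsU hv.le
    nlinarith [hB]
  rcases le_total (1/2) x with hc2 | hc2
  · -- right case: s ≤ 0
    have hBle : B ≤ 2/3 := by rw [hBdef, div_le_iff₀ hv]; linarith
    have hAge : 2 ≤ A := by rw [hAdef, le_div_iff₀ hu]; linarith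
    have hs0 : s ≤ 0 := by
      rw [hs]
      apply mul_nonpos_of_nonneg_of_nonpos ha.le
      have : (A + B)/10 ≤ A - B := by linarith
      linarith
    have hsL : a * (-(2 * A)) ≤ s := by
      rw [hs]
      apply mul_le_mul_of_nonneg_left _ ha.le
      linarith
    rw [abs_of_nonpos hs0]
    have h1 : x * s + -s = -((1 - x) * s) := by ring
    rw [h1]
    have h2 : (1 - x) * (a * (-(2 * A))) ≤ (1 - x) * s :=
      mul_le_mul_of_nonneg_left hsL hu.le
    nlinarith [hA]
  · -- middle case
    have hAle : A ≤ 2 := by rw [hAdef, div_le_iff₀ hu]; linarith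
    have hBle : B ≤ 2 := by rw [hBdef, div_le_iff₀ hv]; linarith
    have hAge : 2/3 ≤ A := by rw [hAdef, le_div_iff₀ hu]; linarith
    have hBge : 2/3 ≤ B := by rw [hBdef, le_div_iff₀ hv]; linarith
    have hsU : s ≤ a * 2 := by
      rw [hs]
      apply mul_le_mul_of_nonneg_left _ ha.le
      linarith
    have hsL : a * (-2) ≤ s := by
      rw [hs]
      apply mul_le_mul_of_nonneg_left _ ha.le
      linarith
    rcases abs_cases s with ⟨h, h2⟩ | ⟨h, h2⟩ <;> rw [h]
    · have h3 : x * s ≤ (1/2) * s := mul_le_mul_of_nonneg_right hc2 h2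
      linarith
    · have h3 : x * s ≤ (-1/2) * s := mul_le_mul_of_nonpos_right hc h2.le
      linarith
end

section
/- Let f be a twice continuously differentiable convex function on an open interval I ⊆ ℝ with f'' > 0 and |f'''(x)| ≤ 2·f''(x)^{3/2} on I (1-self-concordance in one dimension). Then for all x, y ∈ I: (f'(y) - f'(x))·(y - x) ≥ f''(x)·(y-x)² / (1 + √(f''(x))·|y - x|). -/
/-! A 1-self-concordant `q = f''` satisfies `|(q^{-1/2})'| = |q'| / (2 q^{3/2}) ≤ 1`, so `q^{-1/2}` is
1-Lipschitz. Hence `q(z) ≥ q(x) / (1 + √(q x) |z - x|)²`, and integrating this bound on `f''` along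
the segment from `x` to `y` gives the inequality, since `t ↦ c t / (1 + √c t)` is an antiderivative
of `c / (1 + √c t)²`. -/

open Real Set

theorem rpow_three_halves_eq_mul_sqrt {q : ℝ} (hq : 0 < q) : q ^ ((3 : ℝ) / 2) = q * √q := by
  rw [show (3 : ℝ) / 2 = 1 + 1 / 2 by norm_num, rpow_add hq, rpow_one, ← sqrt_eq_rpow]

theorem HasDerivAt.inv_sqrt {q : ℝ → ℝ} {q' x : ℝ} (hq : HasDerivAt q q' x) (hpos : 0 < q x) :
    HasDerivAt (fun y => (√(q y))⁻¹) (-q' / (2 * (q x * √(q x)))) x := by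
  have hsqrt : 0 < √(q x) := sqrt_pos.mpr hpos
  refine ((hq.sqrt hpos.ne').inv hsqrt.ne').congr_deriv ?_
  rw [sq_sqrt hpos.le, neg_div, div_div, mul_comm (q x), mul_assoc, neg_div]

section SelfConcordant

variable {q q' : ℝ → ℝ} {s : Set ℝ}

theorem abs_inv_sqrt_sub_le_of_selfConcordant (hs : Convex ℝ s)
    (hq : ∀ x ∈ s, HasDerivAt q (q' x) x) (hpos : ∀ x ∈ s, 0 < q x)
    (hsc : ∀ x ∈ s, |q' x| ≤ 2 * q x ^ ((3 : ℝ) / 2)) {x y : ℝ} (hx : x ∈ s) (hy : y ∈ s) :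
    |(√(q y))⁻¹ - (√(q x))⁻¹| ≤ |y - x| := by
  have hderiv : ∀ z ∈ s, HasDerivWithinAt (fun y => (√(q y))⁻¹)
      (-q' z / (2 * (q z * √(q z)))) s z :=
    fun z hz => ((hq z hz).inv_sqrt (hpos z hz)).hasDerivWithinAt
  have hbound : ∀ z ∈ s, ‖-q' z / (2 * (q z * √(q z)))‖ ≤ 1 := by
    intro z hz
    have hden : 0 < 2 * (q z * √(q z)) := by have := hpos z hz; positivity
    rw [Real.norm_eq_abs, abs_div, abs_neg, abs_of_pos hden, div_le_one hden,
      ← rpow_three_halves_eq_mul_sqrt (hpos z hz)]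
    exact hsc z hz
  simpa using hs.norm_image_sub_le_of_norm_hasDerivWithin_le hderiv hbound hx hy

theorem div_sq_le_of_selfConcordant (hs : Convex ℝ s)
    (hq : ∀ x ∈ s, HasDerivAt q (q' x) x) (hpos : ∀ x ∈ s, 0 < q x)
    (hsc : ∀ x ∈ s, |q' x| ≤ 2 * q x ^ ((3 : ℝ) / 2)) {x y : ℝ} (hx : x ∈ s) (hy : y ∈ s) :
    q x / (1 + √(q x) * |y - x|) ^ 2 ≤ q y := by
  have hqx : 0 < √(q x) := sqrt_pos.mpr (hpos x hx)
  have hqy : 0 < √(q y) := sqrt_pos.mpr (hpos y hy)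
  have hinv : (√(q y))⁻¹ ≤ (1 + √(q x) * |y - x|) / √(q x) := by
    have := (abs_le.mp (abs_inv_sqrt_sub_le_of_selfConcordant hs hq hpos hsc hx hy)).2
    rw [add_div, one_div, mul_div_cancel_left₀ _ hqx.ne']
    linarith
  have hsqrt : √(q x) / (1 + √(q x) * |y - x|) ≤ √(q y) := by
    simpa using inv_anti₀ (by positivity) hinv
  calc q x / (1 + √(q x) * |y - x|) ^ 2 = (√(q x) / (1 + √(q x) * |y - x|)) ^ 2 := by
        rw [div_pow, sq_sqrt (hpos x hx).le]
    _ ≤ √(q y) ^ 2 := by gcongr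
    _ = q y := sq_sqrt (hpos y hy).le

end SelfConcordant

theorem mul_sq_div_le_of_le_hasDerivAt {g g' : ℝ → ℝ} {s : Set ℝ} {c x y : ℝ} (hs : Convex ℝ s)
    (hg : ∀ z ∈ s, HasDerivAt g (g' z) z)
    (hbound : ∀ z ∈ s, c / (1 + √c * |z - x|) ^ 2 ≤ g' z) (hx : x ∈ s) (hy : y ∈ s) :
    c * (y - x) ^ 2 / (1 + √c * |y - x|) ≤ (g y - g x) * (y - x) := by
  set h := y - x
  set r := √c * |h|
  have hr : 0 ≤ r := by positivity
  have hmem : ∀ t ∈ Icc (0 : ℝ) 1, x + t * h ∈ s := fun t ht => hs.add_smul_sub_mem hx hy ht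
  have hden : ∀ t ∈ Icc (0 : ℝ) 1, 0 < 1 + r * t := fun t ht => by nlinarith [ht.1]
  let G : ℝ → ℝ := fun t => (g (x + t * h) - g x) * h - c * h ^ 2 * t / (1 + r * t)
  have hG : ∀ t ∈ Icc (0 : ℝ) 1, HasDerivAt G ((g' (x + t * h) - c / (1 + r * t) ^ 2) * h ^ 2) t := by
    intro t ht
    have hline : HasDerivAt (fun t => x + t * h) h t := by
      simpa using (hasDerivAt_mul_const h).const_add x
    have hnum : HasDerivAt (fun u => c * h ^ 2 * u) (c * h ^ 2) t := by
      simpa using (hasDerivAt_id t).const_mul (c * h ^ 2)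
    have hdenom : HasDerivAt (fun u => 1 + r * u) r t := by
      simpa using ((hasDerivAt_id t).const_mul r).const_add 1
    refine ((((hg _ (hmem t ht)).comp t hline).sub_const (g x)).mul_const h).sub
      (hnum.div hdenom (hden t ht).ne') |>.congr_deriv ?_
    field_simp [(hden t ht).ne']
    ring
  have hG' : ∀ t ∈ Icc (0 : ℝ) 1, 0 ≤ (g' (x + t * h) - c / (1 + r * t) ^ 2) * h ^ 2 := by
    intro t ht
    have hbt := hbound _ (hmem t ht)
    rw [add_sub_cancel_left, abs_mul, abs_of_nonneg ht.1, mul_left_comm, mul_comm t] at hbt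
    exact mul_nonneg (sub_nonneg.mpr hbt) (sq_nonneg h)
  have hmono : MonotoneOn G (Icc 0 1) := by
    exact monotoneOn_of_hasDerivWithinAt_nonneg (convex_Icc 0 1)
      (fun t ht => (hG t ht).continuousAt.continuousWithinAt)
      (fun t ht => (hG t (interior_subset ht)).hasDerivWithinAt)
      (fun t ht => hG' t (interior_subset ht))
  have h01 := hmono (left_mem_Icc.mpr zero_le_one) (right_mem_Icc.mpr zero_le_one) zero_le_one
  simp only [G, zero_mul, add_zero, sub_self, mul_zero, zero_div, one_mul, mul_one] at h01
  rw [add_sub_cancel] at h01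
  linarith

theorem stmt_17_general (a b : ℝ) (f' f'' f''' : ℝ → ℝ)
    (h2 : ∀ x ∈ Set.Ioo a b, HasDerivAt f' (f'' x) x)
    (h3 : ∀ x ∈ Set.Ioo a b, HasDerivAt f'' (f''' x) x)
    (hpos : ∀ x ∈ Set.Ioo a b, 0 < f'' x)
    (hsc : ∀ x ∈ Set.Ioo a b, |f''' x| ≤ 2 * (f'' x) ^ ((3:ℝ)/2)) :
    ∀ x ∈ Set.Ioo a b, ∀ y ∈ Set.Ioo a b,
      f'' x * (y - x) ^ 2 / (1 + Real.sqrt (f'' x) * |y - x|) ≤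
        (f' y - f' x) * (y - x) := fun _ hx _ hy =>
  mul_sq_div_le_of_le_hasDerivAt (convex_Ioo a b) h2
    (fun _ hz => div_sq_le_of_selfConcordant (convex_Ioo a b) h3 hpos hsc hx hz) hx hy

/-- One-dimensional self-concordance inequality: if `f` has derivatives
`f', f'', f'''` on the open interval `(a, b)` with `f'' > 0` and
`|f'''| ≤ 2 f''^{3/2}` (1-self-concordance), then for all `x, y ∈ (a, b)`:
`(f'(y) - f'(x))(y - x) ≥ f''(x)(y-x)² / (1 + √(f''(x)) |y - x|)`. -/
theorem stmt_17 (a b : ℝ) (f f' f'' f''' : ℝ → ℝ)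
    (h1 : ∀ x ∈ Set.Ioo a b, HasDerivAt f (f' x) x)
    (h2 : ∀ x ∈ Set.Ioo a b, HasDerivAt f' (f'' x) x)
    (h3 : ∀ x ∈ Set.Ioo a b, HasDerivAt f'' (f''' x) x)
    (hpos : ∀ x ∈ Set.Ioo a b, 0 < f'' x)
    (hsc : ∀ x ∈ Set.Ioo a b, |f''' x| ≤ 2 * (f'' x) ^ ((3:ℝ)/2)) :
    ∀ x ∈ Set.Ioo a b, ∀ y ∈ Set.Ioo a b,
      f'' x * (y - x) ^ 2 / (1 + Real.sqrt (f'' x) * |y - x|) ≤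
        (f' y - f' x) * (y - x) :=
  stmt_17_general a b f' f'' f''' h2 h3 hpos hsc
end
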